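/- Fix ε ∈ (0,1), δ > 0 with 2δ < (1+ε/2)^α − 1, an integer N ≥ 1, and μ > 0 small enough that 1 + β := (1+ε/2)(1+μ)^{1/α} < 1 + ε. Set t_n := exp((1+μ)ⁿ), and for each n let J_j(n) := [(1+β)s(t_n) + (j−1)((ε−β)/N) s(t_n), (1+β)s(t_n) + j((ε−β)/N) s(t_n)] for j = 1, …, N. Then Σ_{n≥0} P[ ∃ j ∈ {1,…,N} : D⁺_{J_j(n)}(V) ≤ (1+2δ) ln t_n ] < ∞. -/

import Mathlib

open MeasureTheory ProbabilityTheory Filter Set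

noncomputable def drawUp (f : ℝ → ℝ) (a b : ℝ) : ℝ :=
  ⨆ u : Set.Icc a b, (f u.1 - ⨅ v : Set.Icc a u.1, f v.1)

noncomputable def drawDown (f : ℝ → ℝ) (a b : ℝ) : ℝ :=
  ⨆ u : Set.Icc a b, (f u.1 - ⨅ v : Set.Icc u.1 b, f v.1)

structure IsStandardBrownianMotion {Ω : Type*} [MeasurableSpace Ω]
    (P : Measure Ω) (W : ℝ → Ω → ℝ) : Prop where
  measurable : ∀ t : ℝ, Measurable (W t)
  init : ∀ ω, W 0 ω = 0
  cont : ∀ ω, Continuous fun t => W t ω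
  gauss_incr : ∀ s t : ℝ, 0 ≤ s → s ≤ t →
    Measure.map (fun ω => W t ω - W s ω) P = gaussianReal 0 (Real.toNNReal (t - s))
  indep_incr : ∀ (n : ℕ) (t : Fin (n + 1) → ℝ), (∀ i, 0 ≤ t i) → Monotone t →
    iIndepFun
      (fun i : Fin n => fun ω => W (t i.succ) ω - W (t i.castSucc) ω) P

/-- `T` is exponentially distributed with mean `μ`. -/
def IsExponentialWithMean {Ω : Type*} [MeasurableSpace Ω]
    (P : Measure Ω) (T : Ω → ℝ) (μ : ℝ) : Prop :=
  ∀ x : ℝ, 0 ≤ x → P {ω | x < T ω} = ENNReal.ofReal (Real.exp (-(x / μ)))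

noncomputable def sFun (σ b α t : ℝ) : ℝ :=
  ((2 * α * b / (σ ^ 2 * (1 - 2 * α))) * (Real.log (Real.log t))⁻¹ * Real.log t) ^ (1 / α)

noncomputable def Vfun (σ b α : ℝ) (w : ℝ → ℝ) (x : ℝ) : ℝ :=
  σ * w x - b / (1 - α) * x ^ (1 - α)

/-! Every `J_j(n)` lies to the right of `A = (1 + β) s(t_n)`, where the drift of `V` falls by at
most `b A^{-α}` per unit length. Cut `J_j(n)` into `k` blocks of length `L = h A^α / b`, where
`h = (1 + 2δ) ln t_n`: a draw-up at most `h` forces every Brownian increment over a block to be at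
most `2h/σ`. By independence of the increments this has probability at most `(1 - q)^k ≤ e^{-kq}`,
where `q = φ(2h/(σ√L) + 1)` bounds the Gaussian tail from below (`φ` the standard normal density).
Because `1 + 2δ < (1 + β)^α`, `log (k q)` grows linearly in `n`, so even after a union bound over
`j` the `n`-th probability is eventually below `e^{-n}`. -/

open Real Asymptotics

lemma sub_le_drawUp {f : ℝ → ℝ} {a b x y : ℝ} (hf : ContinuousOn f (Icc a b))
    (hax : a ≤ x) (hxy : x ≤ y) (hyb : y ≤ b) : f y - f x ≤ drawUp f a b := by
  obtain ⟨m, hm⟩ := (isCompact_Icc.image_of_continuousOn hf).bddBelow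
  obtain ⟨M, hM⟩ := (isCompact_Icc.image_of_continuousOn hf).bddAbove
  have hm' : ∀ u ≤ b, ∀ v : Icc a u, m ≤ f v :=
    fun u hu v => hm ⟨v, ⟨v.2.1, v.2.2.trans hu⟩, rfl⟩
  have hinf : (⨅ v : Icc a y, f v) ≤ f x := by
    refine ciInf_le ⟨m, ?_⟩ (⟨x, hax, hxy⟩ : Icc a y)
    rintro _ ⟨v, rfl⟩
    exact hm' y hyb v
  have hbdd : BddAbove (range fun u : Icc a b => f u - ⨅ v : Icc a u.1, f v) := by
    refine ⟨M - m, ?_⟩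
    rintro _ ⟨u, rfl⟩
    have : Nonempty (Icc a u.1) := ⟨⟨a, le_rfl, u.2.1⟩⟩
    linarith [hM (mem_image_of_mem f u.2), le_ciInf (hm' u u.2.2)]
  unfold drawUp
  linarith [le_ciSup hbdd (⟨y, hax.trans hxy, hyb⟩ : Icc a b)]

lemma rpow_sub_rpow_le_mul_sub {p x y : ℝ} (hp0 : 0 ≤ p) (hp1 : p ≤ 1) (hx : 0 < x)
    (hxy : x ≤ y) : y ^ p - x ^ p ≤ p * x ^ (p - 1) * (y - x) := by
  have hu : 1 ≤ y / x := (one_le_div hx).2 hxy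
  have hbern : (1 + (y / x - 1)) ^ p ≤ 1 + p * (y / x - 1) :=
    rpow_one_add_le_one_add_mul_self (by linarith) hp0 hp1
  rw [add_sub_cancel] at hbern
  calc y ^ p - x ^ p = x ^ p * ((y / x) ^ p - 1) := by
        rw [div_rpow (hx.le.trans hxy) hx.le]; field_simp
    _ ≤ x ^ p * (p * (y / x - 1)) := by gcongr; linarith
    _ = p * x ^ (p - 1) * (y - x) := by rw [rpow_sub_one hx.ne']; field_simp

lemma continuous_Vfun {σ b α : ℝ} (hα : α ≤ 1) {w : ℝ → ℝ} (hw : Continuous w) :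
    Continuous (Vfun σ b α w) :=
  (continuous_const.mul hw).sub (continuous_const.mul (continuous_rpow_const (by linarith)))

lemma sub_le_of_drawUp_Vfun_le {σ b α : ℝ} (hσ : 0 < σ) (hb : 0 ≤ b) (hα0 : 0 < α) (hα1 : α < 1)
    {w : ℝ → ℝ} (hw : Continuous w) {A L h u v x : ℝ} (hA : 0 < A) (hAu : A ≤ u) (hux : u ≤ x)
    (hL : 0 ≤ L) (hxv : x + L ≤ v) (hdrift : b * A ^ (-α) * L ≤ h)
    (hV : drawUp (Vfun σ b α w) u v ≤ h) : w (x + L) - w x ≤ 2 * h / σ := by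
  have hx : 0 < x := hA.trans_le (hAu.trans hux)
  have hup := sub_le_drawUp (continuous_Vfun (σ := σ) (b := b) hα1.le hw).continuousOn hux
    (le_add_of_nonneg_right hL) hxv
  have hconcave := rpow_sub_rpow_le_mul_sub (p := 1 - α) (by linarith) (by linarith) hx
    (le_add_of_nonneg_right hL)
  have hxA : x ^ (-α) ≤ A ^ (-α) := rpow_le_rpow_of_nonpos hA (hAu.trans hux) (by linarith)
  have hdrift' : b / (1 - α) * ((x + L) ^ (1 - α) - x ^ (1 - α)) ≤ h := by
    calc b / (1 - α) * ((x + L) ^ (1 - α) - x ^ (1 - α))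
        ≤ b / (1 - α) * ((1 - α) * x ^ (1 - α - 1) * (x + L - x)) := by
          gcongr
      _ = b * x ^ (-α) * L := by
          rw [sub_sub_cancel_left, add_sub_cancel_left]; field_simp [(by linarith : 1 - α ≠ 0)]
      _ ≤ h := le_trans (by gcongr) hdrift
  rw [le_div_iff₀ hσ]
  simp only [Vfun] at hup
  linarith

lemma ofReal_gaussianPDFReal_le_gaussianReal_Ioi {v : NNReal} (hv : v ≠ 0) {c : ℝ} (hc : 0 ≤ c) :
    ENNReal.ofReal (gaussianPDFReal 0 1 (c / √v + 1)) ≤ gaussianReal 0 v (Ioi c) := by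
  have hscale : gaussianPDFReal 0 1 (c / √v + 1) = gaussianPDFReal 0 v (c + √v) * √v := by
    have hr : 0 < √(v : ℝ) := sqrt_pos.2 (by positivity)
    rw [show c / √v + 1 = (√v)⁻¹ * (c + √v) by field_simp, gaussianPDFReal_inv_mul hr.ne',
      mul_zero, abs_of_pos hr, mul_comm]
    congr
    ext
    simp
  calc ENNReal.ofReal (gaussianPDFReal 0 1 (c / √v + 1))
      = ∫⁻ _ in Ioc c (c + √v), gaussianPDF 0 v (c + √v) := by
        rw [setLIntegral_const, volume_Ioc, gaussianPDF, ← ENNReal.ofReal_mul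
          (gaussianPDFReal_nonneg _ _ _), hscale, add_sub_cancel_left]
    _ ≤ ∫⁻ x in Ioc c (c + √v), gaussianPDF 0 v x := by
        refine setLIntegral_mono' measurableSet_Ioc fun x hx => ENNReal.ofReal_le_ofReal ?_
        have hx0 : 0 ≤ x := hc.trans hx.1.le
        simp only [gaussianPDFReal, sub_zero]
        gcongr
        exact hx.2
    _ = gaussianReal 0 v (Ioc c (c + √v)) := (gaussianReal_apply 0 hv _).symm
    _ ≤ gaussianReal 0 v (Ioi c) := measure_mono Ioc_subset_Ioi_self

lemma gaussianReal_Iic_le {v : NNReal} (hv : v ≠ 0) {c : ℝ} (hc : 0 ≤ c) :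
    gaussianReal 0 v (Iic c) ≤ ENNReal.ofReal (1 - gaussianPDFReal 0 1 (c / √v + 1)) := by
  rw [← compl_Ioi, prob_compl_eq_one_sub measurableSet_Ioi,
    ENNReal.ofReal_sub _ (gaussianPDFReal_nonneg _ _ _), ENNReal.ofReal_one]
  exact tsub_le_tsub_left (ofReal_gaussianPDFReal_le_gaussianReal_Ioi hv hc) 1

lemma gaussianPDFReal_zero_one (x : ℝ) :
    gaussianPDFReal 0 1 x = (√(2 * π))⁻¹ * exp (-x ^ 2 / 2) := by
  simp [gaussianPDFReal]

lemma gaussianPDFReal_zero_one_le_one (x : ℝ) : gaussianPDFReal 0 1 x ≤ 1 := by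
  rw [gaussianPDFReal_zero_one]
  have hpi : (√(2 * π))⁻¹ ≤ 1 := inv_le_one_of_one_le₀ (one_le_sqrt.2 (by linarith [pi_gt_three]))
  have hexp : exp (-x ^ 2 / 2) ≤ 1 := exp_le_one_iff.2 (by nlinarith [sq_nonneg x])
  nlinarith [exp_pos (-x ^ 2 / 2)]

lemma IsStandardBrownianMotion.measure_iInter_incr_le {Ω : Type*} [MeasurableSpace Ω]
    {P : Measure Ω} [IsProbabilityMeasure P] {W : ℝ → Ω → ℝ} (hW : IsStandardBrownianMotion P W)
    {t₀ L c : ℝ} (ht₀ : 0 ≤ t₀) (hL : 0 < L) (hc : 0 ≤ c) (k : ℕ) :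
    P (⋂ i : Fin k, {ω | W (t₀ + i * L + L) ω - W (t₀ + i * L) ω ≤ c})
      ≤ ENNReal.ofReal (1 - gaussianPDFReal 0 1 (c / √L + 1)) ^ k := by
  set t : Fin (k + 1) → ℝ := fun i => t₀ + i * L
  have ht : Monotone t := fun i j hij => by
    simp only [t]; gcongr; exact_mod_cast hij
  have hsucc : ∀ i : Fin k, t i.succ = t i.castSucc + L := fun i => by
    simp only [t, Fin.val_succ, Fin.val_castSucc]; push_cast; ring
  have hevent : (⋂ i : Fin k, {ω | W (t₀ + i * L + L) ω - W (t₀ + i * L) ω ≤ c})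
      = ⋂ i ∈ (Finset.univ : Finset (Fin k)),
          (fun ω => W (t i.succ) ω - W (t i.castSucc) ω) ⁻¹' Iic c := by
    simp only [hsucc, t, Finset.mem_univ, iInter_true]
    rfl
  have hincr : ∀ i : Fin k, P ((fun ω => W (t i.succ) ω - W (t i.castSucc) ω) ⁻¹' Iic c)
      ≤ ENNReal.ofReal (1 - gaussianPDFReal 0 1 (c / √L + 1)) := fun i => by
    rw [← Measure.map_apply (f := fun ω => W (t i.succ) ω - W (t i.castSucc) ω)
      ((hW.measurable _).sub (hW.measurable _)) measurableSet_Iic,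
      hW.gauss_incr _ _ (by positivity) (ht (Fin.castSucc_le_succ i)), hsucc, add_sub_cancel_left]
    simpa [Real.coe_toNNReal _ hL.le] using
      gaussianReal_Iic_le (Real.toNNReal_pos.2 hL).ne' hc
  rw [hevent, (hW.indep_incr k t (fun i => by positivity) ht).measure_inter_preimage_eq_mul _
    fun _ _ => measurableSet_Iic]
  simpa using Finset.prod_le_prod' (s := Finset.univ) fun i _ => hincr i

lemma IsStandardBrownianMotion.measure_exists_drawUp_Vfun_le {Ω : Type*} [MeasurableSpace Ω]
    {P : Measure Ω} [IsProbabilityMeasure P] {W : ℝ → Ω → ℝ} (hW : IsStandardBrownianMotion P W)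
    {σ b α : ℝ} (hσ : 0 < σ) (hb : 0 ≤ b) (hα0 : 0 < α) (hα1 : α < 1) {N : ℕ} (u v : Fin N → ℝ)
    {A L h : ℝ} (k : ℕ) (hA : 0 < A) (hu : ∀ j, A ≤ u j) (hv : ∀ j, u j + k * L ≤ v j)
    (hL : 0 < L) (hh : 0 ≤ h) (hdrift : b * A ^ (-α) * L ≤ h) :
    P {ω | ∃ j, drawUp (Vfun σ b α fun s => W s ω) (u j) (v j) ≤ h}
      ≤ N * ENNReal.ofReal (1 - gaussianPDFReal 0 1 (2 * h / σ / √L + 1)) ^ k := by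
  have hincl : {ω | ∃ j, drawUp (Vfun σ b α fun s => W s ω) (u j) (v j) ≤ h}
      ⊆ ⋃ j, ⋂ i : Fin k, {ω | W (u j + i * L + L) ω - W (u j + i * L) ω ≤ 2 * h / σ} := by
    rintro ω ⟨j, hj⟩
    refine mem_iUnion.2 ⟨j, mem_iInter.2 fun i => ?_⟩
    have hik : (i + 1 : ℝ) ≤ k := by exact_mod_cast i.isLt
    refine sub_le_of_drawUp_Vfun_le hσ hb hα0 hα1 (hW.cont ω) hA (hu j)
      (le_add_of_nonneg_right (by positivity)) hL.le ?_ hdrift hj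
    nlinarith [hv j]
  calc _ ≤ _ := measure_mono hincl
    _ ≤ ∑ j, P (⋂ i : Fin k, {ω | W (u j + i * L + L) ω - W (u j + i * L) ω ≤ 2 * h / σ}) :=
      measure_iUnion_fintype_le _ _
    _ ≤ ∑ _j : Fin N, ENNReal.ofReal (1 - gaussianPDFReal 0 1 (2 * h / σ / √L + 1)) ^ k :=
      Finset.sum_le_sum fun j _ =>
        hW.measure_iInter_incr_le (hA.le.trans (hu j)) hL (by positivity) k
    _ = _ := by simp

lemma natCast_mul_ofReal_one_sub_pow_le {N k : ℕ} {q x : ℝ} (h : log N + x ≤ k * q) :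
    N * ENNReal.ofReal (1 - q) ^ k ≤ ENNReal.ofReal (exp (-x)) := by
  obtain rfl | hN := N.eq_zero_or_pos
  · simp
  have hNq : (N : ℝ) * exp (-q) ^ k ≤ exp (-x) := by
    rw [← exp_nat_mul, ← le_div_iff₀' (by positivity), ← exp_log (Nat.cast_pos.2 hN : (0:ℝ) < N),
      ← exp_sub, exp_le_exp]
    linarith
  calc (N : ENNReal) * ENNReal.ofReal (1 - q) ^ k ≤ N * ENNReal.ofReal (exp (-q)) ^ k := by
        gcongr; linarith [add_one_le_exp (-q)]
    _ = ENNReal.ofReal (N * exp (-q) ^ k) := by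
        rw [ENNReal.ofReal_mul (by positivity), ENNReal.ofReal_natCast,
          ENNReal.ofReal_pow (exp_pos _).le]
    _ ≤ _ := ENNReal.ofReal_le_ofReal hNq

lemma ENNReal.tsum_ne_top_of_eventually_le {f g : ℕ → ENNReal} (hf : ∀ n, f n ≠ ⊤)
    (hg : ∑' n, g n ≠ ⊤) (hfg : ∀ᶠ n in atTop, f n ≤ g n) : ∑' n, f n ≠ ⊤ := by
  obtain ⟨M, hM⟩ := eventually_atTop.1 hfg
  rw [← ENNReal.summable.sum_add_tsum_nat_add' (k := M)]
  refine ENNReal.add_ne_top.2 ⟨ENNReal.sum_ne_top.2 fun n _ => hf n, ne_top_of_le_ne_top hg ?_⟩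
  exact (ENNReal.tsum_le_tsum fun n => hM _ (by omega)).trans
    (ENNReal.tsum_comp_le_tsum_of_injective (add_left_injective M) g)

lemma eventually_add_mul_le_mul_exp {a K : ℝ} (B C d g : ℝ) (ha : 0 < a) (hK : 0 < K) :
    ∀ᶠ x in atTop, B + C * x ≤ K * exp (a * x - d * √x - g * log x) := by
  have hsqrt : Real.sqrt =o[atTop] id := by
    refine (isLittleO_iff_tendsto' ?_).2 ?_
    · filter_upwards [eventually_gt_atTop 0] with x hx h using absurd h hx.ne'
    · simpa only [id, sqrt_div_self, Function.comp_def] using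
        tendsto_inv_atTop_zero.comp tendsto_sqrt_atTop
  have hsub : (fun x => d * √x + g * log x) =o[atTop] id :=
    (hsqrt.const_mul_left d).add (isLittleO_log_id_atTop.const_mul_left g)
  have hlin : (fun x => B + C * x) =o[atTop] fun x => exp (a / 2 * x) := by
    refine IsBigO.trans_isLittleO ?_
      (by simpa using isLittleO_pow_exp_pos_mul_atTop 1 (half_pos ha))
    exact (isLittleO_const_id_atTop B).isBigO.add ((isBigO_refl _ _).const_mul_left C)
  filter_upwards [hsub.bound (half_pos ha), hlin.bound hK, eventually_ge_atTop 0] with x h1 h2 hx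
  rw [Real.norm_eq_abs, Real.norm_eq_abs, id, abs_of_nonneg hx] at h1
  rw [Real.norm_eq_abs, Real.norm_eq_abs, abs_of_pos (exp_pos _)] at h2
  calc B + C * x ≤ K * exp (a / 2 * x) := (le_abs_self _).trans h2
    _ ≤ _ := by gcongr; linarith [le_abs_self (d * √x + g * log x)]

lemma sFun_exp_eq_rpow {σ b α T : ℝ} :
    sFun σ b α (exp T) = (2 * α * b / (σ ^ 2 * (1 - 2 * α)) * (log T)⁻¹ * T) ^ (1 / α) := by
  rw [sFun, log_exp]

lemma sFun_exp_pos {σ b α T : ℝ} (hσ : σ ≠ 0) (hb : 0 < b) (hα0 : 0 < α) (hα : α < 1 / 2)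
    (hT : 1 < T) : 0 < sFun σ b α (exp T) := by
  rw [sFun_exp_eq_rpow]
  have : 0 < 1 - 2 * α := by linarith
  have : 0 < log T := log_pos hT
  positivity

lemma div_mul_gaussianPDFReal_eq {σ b α Cs c d κ T s : ℝ} (hσ : 0 < σ) (hb : 0 < b)
    (hα : 0 < α) (hCs : 0 < Cs) (hc : 0 < c) (hd : 0 < d) (hκ : 0 < κ) (hT : 1 < T)
    (hs : 0 < s) (hsα : s ^ α = Cs * (log T)⁻¹ * T) :
    d * s / (κ * T * (c * s) ^ α / b)
        * gaussianPDFReal 0 1 (2 * (κ * T) / σ / √(κ * T * (c * s) ^ α / b) + 1)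
      = (√(2 * π))⁻¹ * exp (log (d * b / (κ * c ^ α)) + (1 / α - 1) * log Cs - 1 / 2)
        * exp ((1 / α - 2 - 2 * κ * b / (σ ^ 2 * c ^ α * Cs)) * log T
          - √(4 * κ * b / (σ ^ 2 * c ^ α * Cs)) * √(log T) - (1 / α - 1) * log (log T)) := by
  have hℓ : 0 < log T := log_pos hT
  have hL : κ * T * (c * s) ^ α / b = κ * c ^ α * Cs * T ^ 2 / (b * log T) := by
    rw [mul_rpow hc.le hs.le, hsα]; field_simp
  have hlogs : log s = (log Cs - log (log T) + log T) / α := by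
    rw [eq_div_iff hα.ne', mul_comm, ← log_rpow hs, hsα, log_mul (by positivity) (by positivity),
      log_mul hCs.ne' (by positivity), log_inv, sub_eq_add_neg]
  have hlogR : log (d * s / (κ * T * (c * s) ^ α / b)) = log (d * b / (κ * c ^ α))
      + (1 / α - 1) * log Cs + (1 / α - 2) * log T - (1 / α - 1) * log (log T) := by
    simp (disch := positivity) only [hL, log_mul, log_div, log_pow, log_rpow hc]
    rw [hlogs]
    field_simp
    ring
  have hz : 2 * (κ * T) / σ / √(κ * T * (c * s) ^ α / b)
      = √(4 * κ * b / (σ ^ 2 * c ^ α * Cs)) * √(log T) := by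
    rw [← sqrt_mul (by positivity), ← sqrt_sq (by positivity : 0 ≤ 2 * (κ * T) / σ / _)]
    congr 1
    rw [div_pow, sq_sqrt (by positivity), hL]
    field_simp
    norm_num
  have hz2 : (√(4 * κ * b / (σ ^ 2 * c ^ α * Cs)) * √(log T) + 1) ^ 2
      = 4 * κ * b / (σ ^ 2 * c ^ α * Cs) * log T
        + 2 * √(4 * κ * b / (σ ^ 2 * c ^ α * Cs)) * √(log T) + 1 := by
    rw [add_sq, mul_pow, sq_sqrt (by positivity), sq_sqrt hℓ.le]; ring
  rw [gaussianPDFReal_zero_one, hz, hz2, ← exp_log (by positivity : 0 < d * s / _), hlogR,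
    mul_left_comm, ← exp_add, mul_assoc (√(2 * π))⁻¹, ← exp_add]
  ring_nf

lemma eventually_le_floor_mul_gaussianPDFReal {σ b α : ℝ} (hσ : 0 < σ) (hb : 0 < b)
    (hα0 : 0 < α) (hα : α < 1 / 2) {c d κ : ℝ} (hc : 0 < c) (hd : 0 < d) (hκ : 0 < κ)
    (hκc : κ < c ^ α) (B C : ℝ) :
    ∀ᶠ T in atTop, B + C * log T ≤
      ⌊d * sFun σ b α (exp T) / (κ * T * (c * sFun σ b α (exp T)) ^ α / b)⌋₊
        * gaussianPDFReal 0 1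
            (2 * (κ * T) / σ / √(κ * T * (c * sFun σ b α (exp T)) ^ α / b) + 1) := by
  set Cs := 2 * α * b / (σ ^ 2 * (1 - 2 * α))
  have hCs : 0 < Cs := div_pos (by positivity) (mul_pos (by positivity) (by linarith))
  have hgrowth : 0 < 1 / α - 2 - 2 * κ * b / (σ ^ 2 * c ^ α * Cs) := by
    have hρ : 0 < 1 / α - 2 := by rw [sub_pos, lt_div_iff₀ hα0]; linarith
    have hκc' : κ / c ^ α < 1 := (div_lt_one (by positivity)).2 hκc
    have : 2 * κ * b / (σ ^ 2 * c ^ α * Cs) = κ / c ^ α * (1 / α - 2) := by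
      simp only [Cs]; field_simp
    nlinarith
  filter_upwards [tendsto_log_atTop.eventually (eventually_add_mul_le_mul_exp (B + 1) C
    (√(4 * κ * b / (σ ^ 2 * c ^ α * Cs))) (1 / α - 1) hgrowth (by positivity :
      0 < (√(2 * π))⁻¹ * exp (log (d * b / (κ * c ^ α)) + (1 / α - 1) * log Cs - 1 / 2))),
    eventually_gt_atTop 1] with T hT hT1
  have hX : 0 < Cs * (log T)⁻¹ * T := mul_pos (mul_pos hCs (inv_pos.2 (log_pos hT1))) (by linarith)
  have hs : 0 < sFun σ b α (exp T) := sFun_exp_pos hσ.ne' hb hα0 hα hT1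
  have hsα : sFun σ b α (exp T) ^ α = Cs * (log T)⁻¹ * T := by
    rw [sFun_exp_eq_rpow, one_div, rpow_inv_rpow hX.le hα0.ne']
  rw [← div_mul_gaussianPDFReal_eq hσ hb hα0 hCs hc hd hκ hT1 hs hsα] at hT
  set R := d * sFun σ b α (exp T) / (κ * T * (c * sFun σ b α (exp T)) ^ α / b)
  set q := gaussianPDFReal 0 1 (2 * (κ * T) / σ / √(κ * T * (c * sFun σ b α (exp T)) ^ α / b) + 1)
  have hfloor : R - 1 ≤ ⌊R⌋₊ := (Nat.sub_one_lt_floor _).le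
  have hq0 : 0 ≤ q := gaussianPDFReal_nonneg _ _ _
  have hq1 : q ≤ 1 := gaussianPDFReal_zero_one_le_one _
  calc B + C * log T ≤ R * q - q := by linarith
    _ = (R - 1) * q := by ring
    _ ≤ ⌊R⌋₊ * q := by gcongr

lemma IsStandardBrownianMotion.eventually_measure_exists_drawUp_Vfun_le {Ω : Type*}
    [MeasurableSpace Ω] {P : Measure Ω} [IsProbabilityMeasure P] {W : ℝ → Ω → ℝ}
    (hW : IsStandardBrownianMotion P W) {σ b α : ℝ} (hσ : 0 < σ) (hb : 0 < b) (hα0 : 0 < α)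
    (hα : α < 1 / 2) {c d κ : ℝ} (hc : 0 < c) (hd : 0 < d) (hκ : 0 < κ) (hκc : κ < c ^ α)
    (N : ℕ) (C : ℝ) :
    ∀ᶠ T in atTop, P {ω | ∃ j : Fin N, drawUp (Vfun σ b α fun s => W s ω)
        (c * sFun σ b α (exp T) + j * d * sFun σ b α (exp T))
        (c * sFun σ b α (exp T) + (j + 1) * d * sFun σ b α (exp T)) ≤ κ * T}
      ≤ ENNReal.ofReal (exp (-(C * log T))) := by
  filter_upwards [eventually_le_floor_mul_gaussianPDFReal hσ hb hα0 hα hc hd hκ hκc (log N) C,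
    eventually_gt_atTop 1] with T hT hT1
  set s := sFun σ b α (exp T)
  set L := κ * T * (c * s) ^ α / b with hL_def
  have hs : 0 < s := sFun_exp_pos hσ.ne' hb hα0 hα hT1
  have hL : 0 < L := by positivity
  have hk : ⌊d * s / L⌋₊ * L ≤ d * s := (le_div_iff₀ hL).1 (Nat.floor_le (by positivity))
  refine (hW.measure_exists_drawUp_Vfun_le hσ hb.le hα0 (by linarith) _ _ _ (mul_pos hc hs)
    (fun j => le_add_of_nonneg_right (by positivity)) (fun j => by linarith) hL (by positivity)
    ?_).trans (natCast_mul_ofReal_one_sub_pow_le hT)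
  rw [hL_def, rpow_neg (by positivity)]
  exact le_of_eq (by field_simp)

theorem summable_prob_small_drawUp_V_general
    {Ω : Type*} [MeasurableSpace Ω] (P : Measure Ω) [IsProbabilityMeasure P]
    (W : ℝ → Ω → ℝ) (hW : IsStandardBrownianMotion P W)
    (σ b α : ℝ) (hσ : 0 < σ) (hb : 0 < b) (hα : α ∈ Set.Ioo (0 : ℝ) (1 / 2))
    (ε δ μ : ℝ) (hε : ε ∈ Set.Ioo (0 : ℝ) 1) (hδ : 0 < δ) (hμ : 0 < μ)
    (hδ' : 2 * δ < (1 + ε / 2) ^ α - 1)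
    (N : ℕ)
    (hβ : (1 + ε / 2) * (1 + μ) ^ ((1 : ℝ) / α) < 1 + ε) :
    (∑' n : ℕ,
      P {ω | ∃ j : Fin N,
        drawUp (Vfun σ b α (fun s => W s ω))
          ((1 + ε / 2) * (1 + μ) ^ ((1 : ℝ) / α) * sFun σ b α (Real.exp ((1 + μ) ^ n))
            + (j : ℝ) * ((ε - ((1 + ε / 2) * (1 + μ) ^ ((1 : ℝ) / α) - 1)) / N)
              * sFun σ b α (Real.exp ((1 + μ) ^ n)))
          ((1 + ε / 2) * (1 + μ) ^ ((1 : ℝ) / α) * sFun σ b α (Real.exp ((1 + μ) ^ n))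
            + ((j : ℝ) + 1) * ((ε - ((1 + ε / 2) * (1 + μ) ^ ((1 : ℝ) / α) - 1)) / N)
              * sFun σ b α (Real.exp ((1 + μ) ^ n)))
          ≤ (1 + 2 * δ) * Real.log (Real.exp ((1 + μ) ^ n))}) < ⊤ := by
  obtain ⟨hα0, hα2⟩ := hα
  obtain rfl | hN := N.eq_zero_or_pos
  · simp
  set c := (1 + ε / 2) * (1 + μ) ^ ((1 : ℝ) / α)
  have hc : 0 < c := mul_pos (by linarith [hε.1]) (by positivity)
  have hd : 0 < (ε - (c - 1)) / N := div_pos (by linarith) (by positivity)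
  have hκc : 1 + 2 * δ < c ^ α := by
    rw [mul_rpow (by linarith [hε.1]) (by positivity), ← rpow_mul (by positivity), one_div,
      inv_mul_cancel₀ hα0.ne', rpow_one]
    nlinarith
  have hμ' : 0 < log (1 + μ) := log_pos (by linarith)
  refine lt_top_iff_ne_top.2 (ENNReal.tsum_ne_top_of_eventually_le
    (g := fun n => ENNReal.ofReal (exp (-n))) (fun n => measure_ne_top P _) ?_ ?_)
  · rw [← ENNReal.ofReal_tsum_of_nonneg (fun n => (exp_pos _).le) Real.summable_exp_neg_nat]
    exact ENNReal.ofReal_ne_top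
  filter_upwards [(tendsto_pow_atTop_atTop_of_one_lt (by linarith : 1 < 1 + μ)).eventually
    (hW.eventually_measure_exists_drawUp_Vfun_le hσ hb hα0 hα2 hc hd (by linarith) hκc N
      (log (1 + μ))⁻¹)] with n hn
  rw [log_pow, mul_comm (n : ℝ), inv_mul_cancel_left₀ hμ'.ne'] at hn
  rwa [log_exp]

/-- summability of the probabilities that some of the N equal
subintervals of [(1+β)s(t_n), (1+ε)s(t_n)] carries a small draw-up of V,
along t_n = exp((1+μ)^n), where 1+β = (1+ε/2)(1+μ)^{1/α}. -/
theorem summable_prob_small_drawUp_V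
    {Ω : Type*} [MeasurableSpace Ω] (P : Measure Ω) [IsProbabilityMeasure P]
    (W : ℝ → Ω → ℝ) (hW : IsStandardBrownianMotion P W)
    (σ b α : ℝ) (hσ : 0 < σ) (hb : 0 < b) (hα : α ∈ Set.Ioo (0 : ℝ) (1 / 2))
    (ε δ μ : ℝ) (hε : ε ∈ Set.Ioo (0 : ℝ) 1) (hδ : 0 < δ) (hμ : 0 < μ)
    (hδ' : 2 * δ < (1 + ε / 2) ^ α - 1)
    (N : ℕ) (hN : 1 ≤ N)
    (hβ : (1 + ε / 2) * (1 + μ) ^ ((1 : ℝ) / α) < 1 + ε) :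
    (∑' n : ℕ,
      P {ω | ∃ j : Fin N,
        drawUp (Vfun σ b α (fun s => W s ω))
          ((1 + ε / 2) * (1 + μ) ^ ((1 : ℝ) / α) * sFun σ b α (Real.exp ((1 + μ) ^ n))
            + (j : ℝ) * ((ε - ((1 + ε / 2) * (1 + μ) ^ ((1 : ℝ) / α) - 1)) / N)
              * sFun σ b α (Real.exp ((1 + μ) ^ n)))
          ((1 + ε / 2) * (1 + μ) ^ ((1 : ℝ) / α) * sFun σ b α (Real.exp ((1 + μ) ^ n))
            + ((j : ℝ) + 1) * ((ε - ((1 + ε / 2) * (1 + μ) ^ ((1 : ℝ) / α) - 1)) / N)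
              * sFun σ b α (Real.exp ((1 + μ) ^ n)))
          ≤ (1 + 2 * δ) * Real.log (Real.exp ((1 + μ) ^ n))}) < ⊤ :=
  summable_prob_small_drawUp_V_general P W hW σ b α hσ hb hα ε δ μ hε hδ hμ hδ' N hβ
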